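/- If every solvable SAS+ instance whose actions all have empty preconditions has a plan, then it has a plan of length at most the number of distinct actions m; hence bounded plan existence with bound k ≥ m for precondition-free instances is equivalent to (unbounded) plan existence. -/

import Mathlib

/-- A SAS+ action: a partial precondition and a partial effect. -/
structure SASAction (V D : Type) where
  pre : V → Option D
  eff : V → Option D

/-- The result of applying an action to a total state. -/
def applyAct {V D : Type} (a : SASAction V D) (s : V → D) : V → D :=
  fun v => (a.eff v).getD (s v)

/-- An action is valid in a state if its precondition agrees with the state. -/
def validIn {V D : Type} (a : SASAction V D) (s : V → D) : Prop :=
  ∀ v x, a.pre v = some x → s v = x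

/-- `isPlanFrom π s t` : the sequence `π` is a plan from state `s` to state `t`. -/
def isPlanFrom {V D : Type} : List (SASAction V D) → (V → D) → (V → D) → Prop
  | [], s, t => t = s
  | a :: π, s, t => validIn a s ∧ isPlanFrom π (applyAct a s) t

/-- The state resulting from applying a sequence of actions. -/
def runPlan {V D : Type} (π : List (SASAction V D)) (s : V → D) : V → D :=
  π.foldl (fun s a => applyAct a s) s

/-- A total state satisfies a partial state wherever the latter is defined. -/
def satisfies {V D : Type} (goal : V → Option D) (s : V → D) : Prop :=
  ∀ v x, goal v = some x → s v = x

/-!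
Without preconditions every action is applicable in every state, so a plan is determined by its
final state, and the final value of a variable is the effect of the last action that writes it.
Hence deleting all but the last occurrence of each action (which is what `List.dedup` keeps)
leaves the final state unchanged, and the result uses each action of `A` at most once.
-/

section Planning

variable {V D : Type}

theorem runPlan_cons (a : SASAction V D) (π : List (SASAction V D)) (s : V → D) :
    runPlan (a :: π) s = runPlan π (applyAct a s) :=
  rfl

theorem applyAct_apply_of_eff_eq_none {a : SASAction V D} {v : V} (h : a.eff v = none)
    (s : V → D) : applyAct a s v = s v := by
  simp [applyAct, h]

theorem runPlan_apply_congr {v : V} :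
    ∀ {π : List (SASAction V D)} {s s' : V → D},
      (s v = s' v ∨ ∃ a ∈ π, (a.eff v).isSome) → runPlan π s v = runPlan π s' v
  | [], _, _, .inl h => h
  | a :: π, s, s', h => by
    rw [runPlan_cons, runPlan_cons]
    apply runPlan_apply_congr
    cases ha : a.eff v with
    | some x => exact .inl (by simp [applyAct, ha])
    | none =>
      rw [applyAct_apply_of_eff_eq_none ha, applyAct_apply_of_eff_eq_none ha]
      rcases h with h | ⟨b, hb, hbv⟩
      · exact .inl h
      · rcases List.mem_cons.1 hb with rfl | hb
        · simp [ha] at hbv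
        · exact .inr ⟨b, hb, hbv⟩

theorem runPlan_map_dedup {ι : Type} [DecidableEq ι] (act : ι → SASAction V D) :
    ∀ (l : List ι) (s : V → D), runPlan (l.dedup.map act) s = runPlan (l.map act) s
  | [], _ => rfl
  | e :: l, s => by
    by_cases he : e ∈ l
    · rw [List.dedup_cons_of_mem he, runPlan_map_dedup act l, List.map_cons, runPlan_cons]
      funext v
      by_cases hv : ((act e).eff v).isSome
      · exact runPlan_apply_congr (.inr ⟨act e, List.mem_map_of_mem he, hv⟩)
      · rw [Option.not_isSome_iff_eq_none] at hv
        exact runPlan_apply_congr (.inl (applyAct_apply_of_eff_eq_none hv s).symm)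
    · rw [List.dedup_cons_of_notMem he, List.map_cons, List.map_cons, runPlan_cons,
        runPlan_cons, runPlan_map_dedup act l]

theorem isPlanFrom.eq_runPlan :
    ∀ {π : List (SASAction V D)} {s t : V → D}, isPlanFrom π s t → t = runPlan π s
  | [], _, _, h => h
  | _ :: _, _, _, h => h.2.eq_runPlan

theorem isPlanFrom_runPlan_of_pre_eq_none :
    ∀ {π : List (SASAction V D)}, (∀ a ∈ π, ∀ v, a.pre v = none) →
      ∀ s, isPlanFrom π s (runPlan π s)
  | [], _, _ => rfl
  | a :: π, hpre, s =>
    ⟨fun v x hx => by simp [hpre a List.mem_cons_self v] at hx,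
      isPlanFrom_runPlan_of_pre_eq_none (fun b hb => hpre b (List.mem_cons_of_mem a hb)) _⟩

theorem isPlanFrom_map_dedup {ι : Type} [DecidableEq ι] {act : ι → SASAction V D} {l : List ι}
    (hpre : ∀ e ∈ l, ∀ v, (act e).pre v = none) {s t : V → D}
    (h : isPlanFrom (l.map act) s t) : isPlanFrom (l.dedup.map act) s t := by
  rw [h.eq_runPlan, ← runPlan_map_dedup]
  refine isPlanFrom_runPlan_of_pre_eq_none (fun a ha => ?_) s
  obtain ⟨e, he, rfl⟩ := List.mem_map.1 ha
  exact hpre e (List.mem_dedup.1 he)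

end Planning

theorem List.length_dedup_le_card {ι : Type} [DecidableEq ι] {l : List ι} {A : Finset ι}
    (hl : ∀ e ∈ l, e ∈ A) : l.dedup.length ≤ A.card :=
  List.card_toFinset l ▸ Finset.card_le_card fun e he => hl e (List.mem_toFinset.1 he)

theorem preconditionFree_bounded_iff_unbounded {V D ι : Type} [DecidableEq ι]
    (A : Finset ι) (act : ι → SASAction V D) (I : V → D) (G : V → Option D)
    (hpre : ∀ e ∈ A, ∀ v, (act e).pre v = none) :
    ((∃ l : List ι, (∀ e ∈ l, e ∈ A) ∧
        ∃ t, isPlanFrom (l.map act) I t ∧ satisfies G t) →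
      ∃ l : List ι, (∀ e ∈ l, e ∈ A) ∧ l.length ≤ A.card ∧
        ∃ t, isPlanFrom (l.map act) I t ∧ satisfies G t) ∧
    (∀ k : ℕ, A.card ≤ k →
      ((∃ l : List ι, (∀ e ∈ l, e ∈ A) ∧ l.length ≤ k ∧
          ∃ t, isPlanFrom (l.map act) I t ∧ satisfies G t) ↔
        (∃ l : List ι, (∀ e ∈ l, e ∈ A) ∧
          ∃ t, isPlanFrom (l.map act) I t ∧ satisfies G t))) := by
  have shorten : (∃ l : List ι, (∀ e ∈ l, e ∈ A) ∧
        ∃ t, isPlanFrom (l.map act) I t ∧ satisfies G t) →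
      ∃ l : List ι, (∀ e ∈ l, e ∈ A) ∧ l.length ≤ A.card ∧
        ∃ t, isPlanFrom (l.map act) I t ∧ satisfies G t := by
    rintro ⟨l, hlA, t, hplan, hG⟩
    exact ⟨l.dedup, fun e he => hlA e (List.mem_dedup.1 he), List.length_dedup_le_card hlA,
      t, isPlanFrom_map_dedup (fun e he => hpre e (hlA e he)) hplan, hG⟩
  refine ⟨shorten, fun k hk => ⟨fun ⟨l, hlA, _, hsol⟩ => ⟨l, hlA, hsol⟩, fun hsol => ?_⟩⟩
  obtain ⟨l, hlA, hlen, hplan⟩ := shorten hsol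
  exact ⟨l, hlA, hlen.trans hk, hplan⟩
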